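/- arXiv:2211.04851 — 6 statements merged into one kernel-verified Lean document; each statement's English description precedes it below -/
import Mathlib

section
/- Let V₁, V₂, V₃, W₁, W₂, W₃ be finite sets, Γ₁ an NS correlation over (V₂,W₁,V₁,W₂), Γ₂ an NS correlation over (V₃,W₂,V₂,W₃), and 𝓔 any channel from V₁ to W₁. Then (Γ₂*Γ₁)[𝓔] = Γ₂[Γ₁[𝓔]], i.e. for all v₃∈V₃ and w₃∈W₃, (Γ₂*Γ₁)[𝓔](w₃|v₃) = Γ₂[Γ₁[𝓔]](w₃|v₃). -/
/-- A channel from `V` to `W` : `E v w` stands for `𝓔(w|v)`. -/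
def IsChannel {V W : Type*} [Fintype W] (E : V → W → ℝ) : Prop :=
  (∀ v w, 0 ≤ E v w) ∧ ∀ v, ∑ w, E v w = 1

/-- A no-signalling correlation over `(V₂, W₁, V₁, W₂)`: `Γ v₂ w₁ v₁ w₂` stands for
`Γ(v₁, w₂ | v₂, w₁)`. -/
def IsNSCorr {V₂ W₁ V₁ W₂ : Type*} [Fintype V₁] [Fintype W₂]
    (Γ : V₂ → W₁ → V₁ → W₂ → ℝ) : Prop :=
  (∀ v₂ w₁ v₁ w₂, 0 ≤ Γ v₂ w₁ v₁ w₂) ∧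
  (∀ v₂ w₁, ∑ v₁, ∑ w₂, Γ v₂ w₁ v₁ w₂ = 1) ∧
  (∀ v₂ w₁ w₁' v₁, ∑ w₂, Γ v₂ w₁ v₁ w₂ = ∑ w₂, Γ v₂ w₁' v₁ w₂) ∧
  (∀ v₂ v₂' w₁ w₂, ∑ v₁, Γ v₂ w₁ v₁ w₂ = ∑ v₁, Γ v₂' w₁ v₁ w₂)

/-- The composition `Γ₂ * Γ₁`. -/
def nsComp {V₁ V₂ V₃ W₁ W₂ W₃ : Type*} [Fintype V₂] [Fintype W₂]
    (Γ₂ : V₃ → W₂ → V₂ → W₃ → ℝ) (Γ₁ : V₂ → W₁ → V₁ → W₂ → ℝ) :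
    V₃ → W₁ → V₁ → W₃ → ℝ :=
  fun v₃ w₁ v₁ w₃ => ∑ v₂, ∑ w₂, Γ₁ v₂ w₁ v₁ w₂ * Γ₂ v₃ w₂ v₂ w₃

/-- The channel `Γ[𝓔]` simulated by `𝓔` with the assistance of `Γ` :
`Γ[𝓔](w₂|v₂) = Σ_{v₁,w₁} Γ(v₁,w₂|v₂,w₁) 𝓔(w₁|v₁)`. -/
def simulate {V₂ W₁ V₁ W₂ : Type*} [Fintype V₁] [Fintype W₁]
    (Γ : V₂ → W₁ → V₁ → W₂ → ℝ) (E : V₁ → W₁ → ℝ) : V₂ → W₂ → ℝ :=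
  fun v₂ w₂ => ∑ v₁, ∑ w₁, Γ v₂ w₁ v₁ w₂ * E v₁ w₁

open Finset

theorem Fintype.sum_comm_pairs {α β γ δ M : Type*} [Fintype α] [Fintype β] [Fintype γ]
    [Fintype δ] [AddCommMonoid M] (f : α → β → γ → δ → M) :
    ∑ a, ∑ b, ∑ c, ∑ d, f a b c d = ∑ c, ∑ d, ∑ a, ∑ b, f a b c d :=
  calc ∑ a, ∑ b, ∑ c, ∑ d, f a b c d = ∑ p : α × β, ∑ q : γ × δ, f p.1 p.2 q.1 q.2 := by
        simp only [Fintype.sum_prod_type]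
    _ = ∑ q : γ × δ, ∑ p : α × β, f p.1 p.2 q.1 q.2 := sum_comm
    _ = ∑ c, ∑ d, ∑ a, ∑ b, f a b c d := by simp only [Fintype.sum_prod_type]

theorem simulate_nsComp_general {V₁ V₂ V₃ W₁ W₂ W₃ : Type*}
    [Fintype V₁] [Fintype V₂] [Fintype W₁] [Fintype W₂]
    (Γ₁ : V₂ → W₁ → V₁ → W₂ → ℝ) (Γ₂ : V₃ → W₂ → V₂ → W₃ → ℝ)
    (E : V₁ → W₁ → ℝ) :
    ∀ v₃ w₃, simulate (nsComp Γ₂ Γ₁) E v₃ w₃ = simulate Γ₂ (simulate Γ₁ E) v₃ w₃ := by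
  intro v₃ w₃
  calc simulate (nsComp Γ₂ Γ₁) E v₃ w₃
      = ∑ v₁, ∑ w₁, ∑ v₂, ∑ w₂, Γ₂ v₃ w₂ v₂ w₃ * (Γ₁ v₂ w₁ v₁ w₂ * E v₁ w₁) := by
        simp only [simulate, nsComp, sum_mul, mul_assoc, mul_left_comm (Γ₁ _ _ _ _)]
    _ = ∑ v₂, ∑ w₂, ∑ v₁, ∑ w₁, Γ₂ v₃ w₂ v₂ w₃ * (Γ₁ v₂ w₁ v₁ w₂ * E v₁ w₁) :=
        Fintype.sum_comm_pairs _
    _ = simulate Γ₂ (simulate Γ₁ E) v₃ w₃ := by simp only [simulate, mul_sum]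

/-- `(Γ₂ * Γ₁)[𝓔] = Γ₂[Γ₁[𝓔]]`. -/
theorem simulate_nsComp {V₁ V₂ V₃ W₁ W₂ W₃ : Type*}
    [Fintype V₁] [Fintype V₂] [Fintype V₃] [Fintype W₁] [Fintype W₂] [Fintype W₃]
    (Γ₁ : V₂ → W₁ → V₁ → W₂ → ℝ) (Γ₂ : V₃ → W₂ → V₂ → W₃ → ℝ)
    (h₁ : IsNSCorr Γ₁) (h₂ : IsNSCorr Γ₂)
    (E : V₁ → W₁ → ℝ) (hE : IsChannel E) :
    ∀ v₃ w₃, simulate (nsComp Γ₂ Γ₁) E v₃ w₃ = simulate Γ₂ (simulate Γ₁ E) v₃ w₃ :=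
  simulate_nsComp_general Γ₁ Γ₂ E
end

section
/- Let V₁, V₂, V₃, W₁, W₂, W₃ be finite sets. If Γ₁ is a quantum commuting NS correlation over (V₂,W₁,V₁,W₂) and Γ₂ is a quantum commuting NS correlation over (V₃,W₂,V₂,W₃), then the composition Γ₂*Γ₁ is a quantum commuting NS correlation over (V₃,W₁,V₁,W₃). -/
/-!
Realize `Γ₁` by `(ξ₁, E₁, F₁)` on `H₁` and `Γ₂` by `(ξ₂, E₂, F₂)` on `H₂`. On `H₁ ⊗ H₂` the
vector `ξ₁ ⊗ ξ₂` and the operators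
`E(v₃,v₁) = ∑ v₂, E₁(v₂,v₁) ⊗ E₂(v₃,v₂)` and `F(w₁,w₃) = ∑ w₂, F₁(w₁,w₂) ⊗ F₂(w₂,w₃)`
realize `Γ₂ * Γ₁`: every summand is a product of commuting positive operators, hence positive;
summing over `v₁` (resp. `w₃`) gives `1` by the POVM relations of both factors; and
`⟨E F (ξ₁ ⊗ ξ₂), ξ₁ ⊗ ξ₂⟩` splits into `∑ v₂, ∑ w₂, Γ₁ Γ₂`. The composite is no-signalling
because every quantum commuting correlation is.
-/

open scoped ComplexOrder

/-- A quantum commuting correlation: realized by commuting POVM's `(E_{v₂,v₁})` and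
`(F_{w₁,w₂})` acting on a Hilbert space and a unit vector `ξ`, via
`Γ(v₁,w₂|v₂,w₁) = ⟨E_{v₂,v₁} F_{w₁,w₂} ξ, ξ⟩`. -/
def IsQCCorr {V₂ W₁ V₁ W₂ : Type*} [Fintype V₁] [Fintype W₂]
    (Γ : V₂ → W₁ → V₁ → W₂ → ℝ) : Prop :=
  ∃ (H : Type) (_ : NormedAddCommGroup H) (_ : InnerProductSpace ℂ H) (_ : CompleteSpace H)
    (ξ : H) (E : V₂ → V₁ → H →L[ℂ] H) (F : W₁ → W₂ → H →L[ℂ] H),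
    ‖ξ‖ = 1 ∧
    (∀ v₂ v₁ (η : H), 0 ≤ (inner ℂ ((E v₂ v₁) η) η : ℂ)) ∧
    (∀ w₁ w₂ (η : H), 0 ≤ (inner ℂ ((F w₁ w₂) η) η : ℂ)) ∧
    (∀ v₂, ∑ v₁, E v₂ v₁ = 1) ∧
    (∀ w₁, ∑ w₂, F w₁ w₂ = 1) ∧
    (∀ v₂ v₁ w₁ w₂, Commute (E v₂ v₁) (F w₁ w₂)) ∧
    (∀ v₂ w₁ v₁ w₂, (Γ v₂ w₁ v₁ w₂ : ℂ) = inner ℂ ((E v₂ v₁) ((F w₁ w₂) ξ)) ξ)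

open scoped ENNReal InnerProductSpace
open ContinuousLinearMap

noncomputable section
namespace lp

section Tensor

variable {𝕜 κ E : Type*} [NormedField 𝕜] [NormedAddCommGroup E] [NormedSpace 𝕜 E]

/-- The elementary tensor `x ⊗ y` under `E ⊗ ℓ²(κ) ≅ ℓ²(κ, E)`. -/
def tmul (x : E) (y : lp (fun _ : κ => 𝕜) 2) : lp (fun _ : κ => E) 2 :=
  ⟨fun k => y k • x,
    (Memℓp.const_mul (lp.memℓp y).norm ‖x‖).mono fun k => by rw [norm_smul, mul_comm]⟩

@[simp] lemma tmul_apply_coe (x : E) (y : lp (fun _ : κ => 𝕜) 2) (k : κ) :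
    tmul x y k = y k • x := rfl

lemma tmul_single [DecidableEq κ] (x : E) (k : κ) :
    tmul x (lp.single 2 k (1 : 𝕜)) = lp.single 2 k x := by
  ext k'
  by_cases h : k' = k <;> simp [h]

end Tensor

section Transpose

variable {𝕜 ι κ E : Type*} [NormedField 𝕜] [NormedAddCommGroup E] [NormedSpace 𝕜 E]

lemma hasSum_norm_sq (f : lp (fun _ : ι => E) 2) : HasSum (fun i => ‖f i‖ ^ 2) (‖f‖ ^ 2) := by
  simpa [Real.rpow_two] using lp.hasSum_norm (p := 2) (by norm_num) f

lemma memℓp_two_iff {f : ι → E} : Memℓp f 2 ↔ Summable fun i => ‖f i‖ ^ 2 := by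
  simpa [Real.rpow_two] using memℓp_gen_iff (p := 2) (f := f) (by norm_num)

lemma summable_norm_sq_uncurry (f : lp (fun _ : κ => lp (fun _ : ι => E) 2) 2) :
    Summable fun p : κ × ι => ‖f p.1 p.2‖ ^ 2 :=
  (summable_prod_of_nonneg fun _ => by positivity).2
    ⟨fun k => (hasSum_norm_sq (f k)).summable, by
      simpa only [(hasSum_norm_sq _).tsum_eq] using (hasSum_norm_sq f).summable⟩

lemma hasSum_tsum_norm_sq_swap (f : lp (fun _ : κ => lp (fun _ : ι => E) 2) 2) :
    HasSum (fun i => ∑' k, ‖f k i‖ ^ 2) (‖f‖ ^ 2) := by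
  have h := summable_norm_sq_uncurry f
  have htot : ∑' p : κ × ι, ‖f p.1 p.2‖ ^ 2 = ‖f‖ ^ 2 :=
    (h.hasSum.prod_fiberwise fun k => hasSum_norm_sq (f k)).unique (hasSum_norm_sq f)
  rw [← htot, ← (Equiv.prodComm ι κ).tsum_eq]
  exact h.prod_symm.hasSum.prod_fiberwise fun i => (h.prod_symm.prod_factor i).hasSum

def col (f : lp (fun _ : κ => lp (fun _ : ι => E) 2) 2) (i : ι) : lp (fun _ : κ => E) 2 :=
  ⟨fun k => f k i, memℓp_two_iff.2 ((summable_norm_sq_uncurry f).prod_symm.prod_factor i)⟩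

lemma hasSum_norm_sq_col (f : lp (fun _ : κ => lp (fun _ : ι => E) 2) 2) :
    HasSum (fun i => ‖col f i‖ ^ 2) (‖f‖ ^ 2) := by
  convert hasSum_tsum_norm_sq_swap f using 2 with i
  exact (hasSum_norm_sq (col f i)).tsum_eq.symm

variable (𝕜 ι κ E) in
def transposeₗᵢ :
    lp (fun _ : κ => lp (fun _ : ι => E) 2) 2 →ₗᵢ[𝕜] lp (fun _ : ι => lp (fun _ : κ => E) 2) 2 where
  toFun f := ⟨col f, memℓp_two_iff.2 (hasSum_norm_sq_col f).summable⟩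
  map_add' _ _ := rfl
  map_smul' _ _ := rfl
  norm_map' f := (pow_left_inj₀ (norm_nonneg _) (norm_nonneg _) two_ne_zero).1 <|
    (hasSum_norm_sq _).unique (hasSum_norm_sq_col f)

variable (𝕜 ι κ E) in
def transpose :
    lp (fun _ : κ => lp (fun _ : ι => E) 2) 2 ≃ₗᵢ[𝕜] lp (fun _ : ι => lp (fun _ : κ => E) 2) 2 :=
  { transposeₗᵢ 𝕜 ι κ E with
    invFun := transposeₗᵢ 𝕜 κ ι E
    left_inv _ := rfl
    right_inv _ := rfl }

@[simp] lemma transpose_apply_coe (f : lp (fun _ : κ => lp (fun _ : ι => E) 2) 2) (i : ι) (k : κ) :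
    transpose 𝕜 ι κ E f i k = f k i := rfl

end Transpose

section Ampliation

variable {𝕜 α E : Type*} [RCLike 𝕜] [NormedAddCommGroup E] [InnerProductSpace 𝕜 E]

lemma inner_tmul (x x' : E) (y y' : lp (fun _ : α => 𝕜) 2) :
    ⟪tmul x y, tmul x' y'⟫_𝕜 = ⟪x, x'⟫_𝕜 * ⟪y, y'⟫_𝕜 := by
  simp only [lp.inner_eq_tsum, tmul_apply_coe, inner_smul_left, inner_smul_right,
    RCLike.inner_apply, ← tsum_mul_left]
  congr 1 with a
  ring

variable [CompleteSpace E]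

variable (𝕜 α E) in
/-- The ampliation `T ↦ T ⊗ 1` for `E ⊗ ℓ²(α) ≅ ℓ²(α, E)`. -/
def ampliation :
    (E →L[𝕜] E) →⋆ₐ[𝕜] (lp (fun _ : α => E) 2 →L[𝕜] lp (fun _ : α => E) 2) where
  toFun T := lp.mapCLM 2 (fun _ => T) (norm_nonneg T) fun _ => le_rfl
  map_one' := by ext; simp
  map_mul' _ _ := by ext; simp
  map_zero' := by ext; simp
  map_add' _ _ := by ext; simp
  commutes' _ := by ext; simp
  map_star' T := by
    refine (eq_adjoint_iff _ _).2 fun f g => ?_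
    simp only [lp.inner_eq_tsum, lp.mapCLM_apply_coe, star_eq_adjoint, adjoint_inner_left]

@[simp] lemma ampliation_apply_coe (T : E →L[𝕜] E) (f : lp (fun _ : α => E) 2) (a : α) :
    ampliation 𝕜 α E T f a = T (f a) := rfl

lemma ampliation_tmul (T : E →L[𝕜] E) (x : E) (y : lp (fun _ : α => 𝕜) 2) :
    ampliation 𝕜 α E T (tmul x y) = tmul (T x) y := by
  ext a
  simp

end Ampliation

section AmpliationRight

variable {𝕜 ι κ : Type*} [RCLike 𝕜]

lemma transpose_tmul (x : lp (fun _ : ι => 𝕜) 2) (y : lp (fun _ : κ => 𝕜) 2) :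
    transpose 𝕜 ι κ 𝕜 (tmul x y) = tmul y x := by
  ext i k
  simp [mul_comm]

variable (𝕜 ι κ) in
/-- The operator `1 ⊗ S` on `ℓ²(ι) ⊗ ℓ²(κ) ≅ ℓ²(κ, ℓ²(ι))`. -/
def ampliationRight : (lp (fun _ : κ => 𝕜) 2 →L[𝕜] lp (fun _ : κ => 𝕜) 2) →⋆ₐ[𝕜]
    (lp (fun _ : κ => lp (fun _ : ι => 𝕜) 2) 2 →L[𝕜] lp (fun _ : κ => lp (fun _ : ι => 𝕜) 2) 2) :=
  (transpose 𝕜 κ ι 𝕜).conjStarAlgEquiv.toStarAlgHom.comp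
    (ampliation 𝕜 ι (lp (fun _ : κ => 𝕜) 2))

lemma ampliationRight_tmul (S : lp (fun _ : κ => 𝕜) 2 →L[𝕜] lp (fun _ : κ => 𝕜) 2)
    (x : lp (fun _ : ι => 𝕜) 2) (y : lp (fun _ : κ => 𝕜) 2) :
    ampliationRight 𝕜 ι κ S (tmul x y) = tmul x (S y) := by
  change transpose 𝕜 κ ι 𝕜
    (ampliation 𝕜 ι (lp (fun _ : κ => 𝕜) 2) S ((transpose 𝕜 κ ι 𝕜).symm (tmul x y))) = _
  rw [(transpose 𝕜 κ ι 𝕜).symm_apply_eq.2 (transpose_tmul y x).symm, ampliation_tmul,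
    transpose_tmul]

lemma commute_ampliation_ampliationRight (T : lp (fun _ : ι => 𝕜) 2 →L[𝕜] lp (fun _ : ι => 𝕜) 2)
    (S : lp (fun _ : κ => 𝕜) 2 →L[𝕜] lp (fun _ : κ => 𝕜) 2) :
    Commute (ampliation 𝕜 κ (lp (fun _ : ι => 𝕜) 2) T) (ampliationRight 𝕜 ι κ S) := by
  classical
  refine lp.ext_continuousLinearMap (by norm_num) fun k => ContinuousLinearMap.ext fun x => ?_
  simp only [ContinuousLinearMap.comp_apply, lp.singleContinuousLinearMap_apply,
    mul_apply_eq_comp]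
  rw [← tmul_single (𝕜 := 𝕜), ampliation_tmul, ampliationRight_tmul, ampliationRight_tmul,
    ampliation_tmul]

end AmpliationRight
end lp

end

universe u v

/-- A model of the Hilbert tensor product `H₁ ⊗ H₂`, built as `ℓ²(κ, ℓ²(ι))` from Hilbert bases
of `H₁` and `H₂`. -/
theorem exists_tensorProduct (𝕜 : Type v) [RCLike 𝕜] (H₁ H₂ : Type u)
    [NormedAddCommGroup H₁] [InnerProductSpace 𝕜 H₁] [CompleteSpace H₁]
    [NormedAddCommGroup H₂] [InnerProductSpace 𝕜 H₂] [CompleteSpace H₂] :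
    ∃ (K : Type (max v u)) (_ : NormedAddCommGroup K) (_ : InnerProductSpace 𝕜 K)
      (_ : CompleteSpace K) (π₁ : (H₁ →L[𝕜] H₁) →⋆ₐ[𝕜] (K →L[𝕜] K))
      (π₂ : (H₂ →L[𝕜] H₂) →⋆ₐ[𝕜] (K →L[𝕜] K)) (tmul : H₁ → H₂ → K),
      (∀ A B, Commute (π₁ A) (π₂ B)) ∧
      (∀ A x y, π₁ A (tmul x y) = tmul (A x) y) ∧
      (∀ B x y, π₂ B (tmul x y) = tmul x (B y)) ∧
      ∀ x x' y y', ⟪tmul x y, tmul x' y'⟫_𝕜 = ⟪x, x'⟫_𝕜 * ⟪y, y'⟫_𝕜 := by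
  obtain ⟨ι, b₁, -⟩ := exists_hilbertBasis 𝕜 H₁
  obtain ⟨κ, b₂, -⟩ := exists_hilbertBasis 𝕜 H₂
  refine ⟨lp (fun _ : κ => lp (fun _ : ι => 𝕜) 2) 2, inferInstance, inferInstance, inferInstance,
    (lp.ampliation 𝕜 κ _).comp b₁.repr.conjStarAlgEquiv.toStarAlgHom,
    (lp.ampliationRight 𝕜 ι κ).comp b₂.repr.conjStarAlgEquiv.toStarAlgHom,
    fun x y => lp.tmul (b₁.repr x) (b₂.repr y),
    fun A B => lp.commute_ampliation_ampliationRight _ _,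
    fun A x y => ?_, fun B x y => ?_, fun x x' y y' => ?_⟩
  · simp [lp.ampliation_tmul]
  · simp [lp.ampliationRight_tmul]
  · simp [lp.inner_tmul]

lemma ContinuousLinearMap.nonneg_iff_forall_inner_nonneg {H : Type*} [NormedAddCommGroup H]
    [InnerProductSpace ℂ H] [CompleteSpace H] (T : H →L[ℂ] H) :
    0 ≤ T ↔ ∀ x, 0 ≤ ⟪T x, x⟫_ℂ := by
  rw [nonneg_iff_isPositive, isPositive_iff]
  refine ⟨And.right, fun h => ⟨?_, h⟩⟩
  exact (LinearMap.isSymmetric_iff_inner_map_self_real _).2 fun x => (h x).isSelfAdjoint.star_eq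

section Correlations

variable {V₁ V₂ V₃ W₁ W₂ W₃ : Type*}

theorem IsQCCorr.isNSCorr [Fintype V₁] [Fintype W₂] {Γ : V₂ → W₁ → V₁ → W₂ → ℝ}
    (h : IsQCCorr Γ) : IsNSCorr Γ := by
  obtain ⟨H, _, _, _, ξ, E, F, hξ, hE, hF, hEsum, hFsum, hcomm, hΓ⟩ := h
  have sum_w₂ (v₂ w₁ v₁) : ((∑ w₂, Γ v₂ w₁ v₁ w₂ : ℝ) : ℂ) = ⟪E v₂ v₁ ξ, ξ⟫_ℂ := by
    simp only [Complex.ofReal_sum, hΓ, ← sum_inner, ← map_sum, ← sum_apply, hFsum,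
      one_apply_eq_self]
  have sum_v₁ (v₂ w₁ w₂) : ((∑ v₁, Γ v₂ w₁ v₁ w₂ : ℝ) : ℂ) = ⟪F w₁ w₂ ξ, ξ⟫_ℂ := by
    simp only [Complex.ofReal_sum, hΓ, ← sum_inner, ← sum_apply, hEsum, one_apply_eq_self]
  refine ⟨fun v₂ w₁ v₁ w₂ => ?_, fun v₂ w₁ => ?_, fun v₂ w₁ w₁' v₁ => ?_,
    fun v₂ v₂' w₁ w₂ => ?_⟩
  · have hEF : 0 ≤ E v₂ v₁ * F w₁ w₂ :=
      (hcomm v₂ v₁ w₁ w₂).mul_nonneg ((nonneg_iff_forall_inner_nonneg _).2 (hE v₂ v₁))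
        ((nonneg_iff_forall_inner_nonneg _).2 (hF w₁ w₂))
    exact_mod_cast hΓ v₂ w₁ v₁ w₂ ▸ (nonneg_iff_forall_inner_nonneg _).1 hEF ξ
  · apply Complex.ofReal_injective
    rw [Complex.ofReal_sum]
    simp only [sum_w₂, ← sum_inner, ← sum_apply, hEsum, one_apply_eq_self,
      inner_self_eq_norm_sq_to_K, hξ]
    simp
  · exact_mod_cast (sum_w₂ v₂ w₁ v₁).trans (sum_w₂ v₂ w₁' v₁).symm
  · exact_mod_cast (sum_v₁ v₂ w₁ w₂).trans (sum_v₁ v₂' w₁ w₂).symm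

theorem isQCCorr_nsComp [Fintype V₁] [Fintype V₂] [Fintype W₂] [Fintype W₃]
    {Γ₁ : V₂ → W₁ → V₁ → W₂ → ℝ} {Γ₂ : V₃ → W₂ → V₂ → W₃ → ℝ}
    (h₁ : IsQCCorr Γ₁) (h₂ : IsQCCorr Γ₂) : IsQCCorr (nsComp Γ₂ Γ₁) := by
  obtain ⟨H₁, _, _, _, ξ₁, E₁, F₁, hξ₁, hE₁, hF₁, hEsum₁, hFsum₁, hcomm₁, hΓ₁⟩ := h₁
  obtain ⟨H₂, _, _, _, ξ₂, E₂, F₂, hξ₂, hE₂, hF₂, hEsum₂, hFsum₂, hcomm₂, hΓ₂⟩ := h₂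
  obtain ⟨K, _, _, _, π₁, π₂, tmul, hπ, hπ₁, hπ₂, inner_tmul⟩ := exists_tensorProduct ℂ H₁ H₂
  have commute_mul {a b c d} (hac : Commute a c) (hbd : Commute b d) :
      Commute (π₁ a * π₂ b) (π₁ c * π₂ d) :=
    ((hac.map π₁).mul_right (hπ a d)).mul_left ((hπ c b).symm.mul_right (hbd.map π₂))
  have nonneg_mul {a b} (ha : ∀ x, 0 ≤ ⟪a x, x⟫_ℂ) (hb : ∀ x, 0 ≤ ⟪b x, x⟫_ℂ) :
      0 ≤ π₁ a * π₂ b :=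
    (hπ a b).mul_nonneg (map_nonneg π₁ ((nonneg_iff_forall_inner_nonneg a).2 ha))
      (map_nonneg π₂ ((nonneg_iff_forall_inner_nonneg b).2 hb))
  refine ⟨K, inferInstance, inferInstance, inferInstance, tmul ξ₁ ξ₂,
    fun v₃ v₁ => ∑ v₂, π₁ (E₁ v₂ v₁) * π₂ (E₂ v₃ v₂),
    fun w₁ w₃ => ∑ w₂, π₁ (F₁ w₁ w₂) * π₂ (F₂ w₂ w₃), ?_, fun v₃ v₁ => ?_, fun w₁ w₃ => ?_,
    fun v₃ => ?_, fun w₁ => ?_, fun v₃ v₁ w₁ w₃ => ?_, fun v₃ w₁ v₁ w₃ => ?_⟩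
  · rw [norm_eq_sqrt_re_inner (𝕜 := ℂ), inner_tmul, inner_self_eq_norm_sq_to_K,
      inner_self_eq_norm_sq_to_K, hξ₁, hξ₂]
    simp
  · exact (nonneg_iff_forall_inner_nonneg _).1 <|
      Finset.sum_nonneg fun v₂ _ => nonneg_mul (hE₁ v₂ v₁) (hE₂ v₃ v₂)
  · exact (nonneg_iff_forall_inner_nonneg _).1 <|
      Finset.sum_nonneg fun w₂ _ => nonneg_mul (hF₁ w₁ w₂) (hF₂ w₂ w₃)
  · rw [Finset.sum_comm]
    simp only [← Finset.sum_mul, ← map_sum, hEsum₁, map_one, one_mul, hEsum₂]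
  · rw [Finset.sum_comm]
    simp only [← Finset.mul_sum, ← map_sum, hFsum₂, map_one, mul_one, hFsum₁]
  · exact Commute.sum_left _ _ _ fun v₂ _ => Commute.sum_right _ _ _ fun w₂ _ =>
      commute_mul (hcomm₁ v₂ v₁ w₁ w₂) (hcomm₂ v₃ v₂ w₂ w₃)
  · simp only [nsComp, Complex.ofReal_sum, Complex.ofReal_mul, hΓ₁, hΓ₂, sum_apply, map_sum,
      mul_apply_eq_comp, hπ₁, hπ₂, sum_inner, inner_tmul]
    exact Finset.sum_comm

end Correlations

theorem nsComp_isQCCorr_general {V₁ V₂ V₃ W₁ W₂ W₃ : Type*}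
    [Fintype V₁] [Fintype V₂] [Fintype W₂] [Fintype W₃]
    (Γ₁ : V₂ → W₁ → V₁ → W₂ → ℝ) (Γ₂ : V₃ → W₂ → V₂ → W₃ → ℝ)
    (hq₁ : IsQCCorr Γ₁) (hq₂ : IsQCCorr Γ₂) :
    IsNSCorr (nsComp Γ₂ Γ₁) ∧ IsQCCorr (nsComp Γ₂ Γ₁) :=
  have hq := isQCCorr_nsComp hq₁ hq₂
  ⟨hq.isNSCorr, hq⟩

/-- The composition of two quantum commuting NS correlations is a quantum commuting
NS correlation. -/
theorem nsComp_isQCCorr {V₁ V₂ V₃ W₁ W₂ W₃ : Type*}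
    [Fintype V₁] [Fintype V₂] [Fintype V₃] [Fintype W₁] [Fintype W₂] [Fintype W₃]
    (Γ₁ : V₂ → W₁ → V₁ → W₂ → ℝ) (Γ₂ : V₃ → W₂ → V₂ → W₃ → ℝ)
    (h₁ : IsNSCorr Γ₁) (hq₁ : IsQCCorr Γ₁)
    (h₂ : IsNSCorr Γ₂) (hq₂ : IsQCCorr Γ₂) :
    IsNSCorr (nsComp Γ₂ Γ₁) ∧ IsQCCorr (nsComp Γ₂ Γ₁) :=
  nsComp_isQCCorr_general Γ₁ Γ₂ hq₁ hq₂
end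

section
/- Let E₁ ⊆ V₁×W₁ and E₂ ⊆ V₂×W₂ be full hypergraphs and Γ an NS correlation over (V₂,W₁,V₁,W₂). Then Γ fits the game E₁⇝E₂ if and only if for every channel 𝓔 from V₁ to W₁ that fits E₁, the simulated channel Γ[𝓔] fits E₂. -/
/-- A channel `𝓔` fits a hypergraph `E` if `𝓔(w|v) > 0` implies `(v,w) ∈ E`. -/
def ChannelFits {V W : Type*} (E : V → W → ℝ) (G : Set (V × W)) : Prop :=
  ∀ v w, 0 < E v w → (v, w) ∈ G

/-- A hypergraph is full if every vertex lies on some edge. -/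
def IsFull {V W : Type*} (G : Set (V × W)) : Prop :=
  ∀ v, ∃ w, (v, w) ∈ G

/-- `Γ` fits the quasi-homomorphism game `E₁ ⇝ E₂`. -/
def FitsQuasiHom {V₁ W₁ V₂ W₂ : Type*} (Γ : V₂ → W₁ → V₁ → W₂ → ℝ)
    (E₁ : Set (V₁ × W₁)) (E₂ : Set (V₂ × W₂)) : Prop :=
  ∀ v₂ w₁ v₁ w₂, 0 < Γ v₂ w₁ v₁ w₂ → (v₁, w₁) ∈ E₁ → (v₂, w₂) ∈ E₂

/-
Both conditions say that no positive weight `Γ(v₁,w₂|v₂,w₁)` meets an edge `(v₁,w₁) ∈ E₁`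
while `(v₂,w₂) ∉ E₂`. Since `Γ` and `𝓔` are nonnegative, `Γ[𝓔](w₂|v₂) > 0` exactly when some
`Γ(v₁,w₂|v₂,w₁)` and `𝓔(w₁|v₁)` are both positive; this gives `⇒`. For `⇐`, fullness of `E₁`
extends a single edge `(v₁,w₁)` to a function `f : V₁ → W₁` whose graph lies in `E₁`, and the
deterministic channel of `f` fits `E₁` and puts weight `1` on `(v₁,w₁)`.
-/

open Finset

theorem simulate_pos_iff {V₂ W₁ V₁ W₂ : Type*} [Fintype V₁] [Fintype W₁]
    {Γ : V₂ → W₁ → V₁ → W₂ → ℝ} {E : V₁ → W₁ → ℝ}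
    (hΓ : ∀ v₂ w₁ v₁ w₂, 0 ≤ Γ v₂ w₁ v₁ w₂) (hE : ∀ v₁ w₁, 0 ≤ E v₁ w₁) (v₂ : V₂) (w₂ : W₂) :
    0 < simulate Γ E v₂ w₂ ↔ ∃ v₁ w₁, 0 < Γ v₂ w₁ v₁ w₂ ∧ 0 < E v₁ w₁ := by
  have hterm : ∀ v₁ w₁, 0 ≤ Γ v₂ w₁ v₁ w₂ * E v₁ w₁ := fun v₁ w₁ =>
    mul_nonneg (hΓ _ _ _ _) (hE _ _)
  simp only [simulate, sum_pos_iff_of_nonneg fun v₁ _ => sum_nonneg fun w₁ _ => hterm v₁ w₁,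
    sum_pos_iff_of_nonneg fun w₁ _ => hterm _ w₁, mem_univ, true_and]
  refine exists₂_congr fun v₁ w₁ => ⟨fun h => ?_, fun ⟨hΓpos, hEpos⟩ => mul_pos hΓpos hEpos⟩
  exact (pos_and_pos_or_neg_and_neg_of_mul_pos h).resolve_right
    fun ⟨hneg, _⟩ => (hΓ v₂ w₁ v₁ w₂).not_gt hneg

def detChannel {V W : Type*} [DecidableEq W] (f : V → W) : V → W → ℝ :=
  fun v w => if w = f v then 1 else 0

section detChannel

variable {V W : Type*} [DecidableEq W] (f : V → W)

theorem detChannel_apply_self (v : V) : detChannel f v (f v) = 1 := if_pos rfl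

theorem isChannel_detChannel [Fintype W] : IsChannel (detChannel f) := by
  refine ⟨fun v w => ?_, fun v => ?_⟩
  · unfold detChannel
    split_ifs <;> norm_num
  · simp [detChannel]

theorem channelFits_detChannel {G : Set (V × W)} (hf : ∀ v, (v, f v) ∈ G) :
    ChannelFits (detChannel f) G := by
  intro v w hw
  by_cases hwv : w = f v
  · exact hwv ▸ hf v
  · simp [detChannel, hwv] at hw

end detChannel

theorem IsFull.exists_graph_subset_of_mem {V W : Type*} [DecidableEq V] {G : Set (V × W)}
    (hG : IsFull G) {v₀ : V} {w₀ : W} (h₀ : (v₀, w₀) ∈ G) :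
    ∃ f : V → W, f v₀ = w₀ ∧ ∀ v, (v, f v) ∈ G := by
  choose g hg using hG
  refine ⟨Function.update g v₀ w₀, Function.update_self _ _ _, fun v => ?_⟩
  by_cases hv : v = v₀
  · subst hv
    simpa using h₀
  · simpa [hv] using hg v

theorem fitsQuasiHom_iff_simulate_fits_general {V₁ W₁ V₂ W₂ : Type*}
    [Fintype V₁] [Fintype W₁] [Fintype V₂] [Fintype W₂]
    (E₁ : Set (V₁ × W₁)) (E₂ : Set (V₂ × W₂))
    (hfull₁ : IsFull E₁)
    (Γ : V₂ → W₁ → V₁ → W₂ → ℝ) (hΓ : IsNSCorr Γ) :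
    FitsQuasiHom Γ E₁ E₂ ↔
      ∀ E : V₁ → W₁ → ℝ, IsChannel E → ChannelFits E E₁ →
        ChannelFits (simulate Γ E) E₂ := by
  classical
  have hΓ_nonneg := hΓ.1
  constructor
  · intro hfits E hE hEfits v₂ w₂ hpos
    obtain ⟨v₁, w₁, hΓpos, hEpos⟩ := (simulate_pos_iff hΓ_nonneg hE.1 v₂ w₂).1 hpos
    exact hfits v₂ w₁ v₁ w₂ hΓpos (hEfits v₁ w₁ hEpos)
  · intro hsim v₂ w₁ v₁ w₂ hΓpos hmem
    obtain ⟨f, hfv₁, hf⟩ := hfull₁.exists_graph_subset_of_mem hmem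
    have hdet := isChannel_detChannel f
    refine hsim _ hdet (channelFits_detChannel f hf) v₂ w₂
      ((simulate_pos_iff hΓ_nonneg hdet.1 v₂ w₂).2 ⟨v₁, w₁, hΓpos, ?_⟩)
    rw [← hfv₁, detChannel_apply_self]
    exact one_pos

/-- For full hypergraphs `E₁, E₂` and an NS correlation `Γ`, `Γ` fits `E₁ ⇝ E₂` iff
the simulation map `𝓔 ↦ Γ[𝓔]` sends channels fitting `E₁` to channels fitting `E₂`. -/
theorem fitsQuasiHom_iff_simulate_fits {V₁ W₁ V₂ W₂ : Type*}
    [Fintype V₁] [Fintype W₁] [Fintype V₂] [Fintype W₂]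
    (E₁ : Set (V₁ × W₁)) (E₂ : Set (V₂ × W₂))
    (hfull₁ : IsFull E₁) (hfull₂ : IsFull E₂)
    (Γ : V₂ → W₁ → V₁ → W₂ → ℝ) (hΓ : IsNSCorr Γ) :
    FitsQuasiHom Γ E₁ E₂ ↔
      ∀ E : V₁ → W₁ → ℝ, IsChannel E → ChannelFits E E₁ →
        ChannelFits (simulate Γ E) E₂ :=
  fitsQuasiHom_iff_simulate_fits_general E₁ E₂ hfull₁ Γ hΓ
end

section
/- Let V and W be finite sets and E₁, E₂ ⊆ V×W be hypergraphs. There exists a local bicorrelation over (V,W,V,W) fitting the game E₁↔E₂ if and only if the hypergraphs E₁ and E₂ are isomorphic, i.e. there exist bijections f : V → V and g : W → W such that f⁻¹(E₁(w)) = E₂(g(w)) for every w∈W, where E(w) = {v : (v,w)∈E}. -/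
/-- A bistochastic matrix `p v₂ v₁` (standing for `p(v₁|v₂)`): nonnegative entries,
all row sums and all column sums equal to `1`. -/
def IsBistochastic {V : Type*} [Fintype V] (p : V → V → ℝ) : Prop :=
  (∀ v₂ v₁, 0 ≤ p v₂ v₁) ∧ (∀ v₂, ∑ v₁, p v₂ v₁ = 1) ∧ (∀ v₁, ∑ v₂, p v₂ v₁ = 1)

/-- A local bicorrelation over `(V, W, V, W)`: a finite convex combination of products
of bistochastic matrices. -/
def IsLocalBicorr {V W : Type*} [Fintype V] [Fintype W]
    (Γ : V → W → V → W → ℝ) : Prop :=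
  ∃ (n : ℕ) (lam : Fin n → ℝ) (p : Fin n → V → V → ℝ) (q : Fin n → W → W → ℝ),
    (∀ i, 0 ≤ lam i) ∧ (∑ i, lam i = 1) ∧
    (∀ i, IsBistochastic (p i)) ∧ (∀ i, IsBistochastic (q i)) ∧
    ∀ v₂ w₁ v₁ w₂, Γ v₂ w₁ v₁ w₂ = ∑ i, lam i * (p i v₂ v₁ * q i w₁ w₂)

/-- `Γ` fits the isomorphism game `E₁ ↔ E₂`. -/
def FitsHom {V₁ W₁ V₂ W₂ : Type*} (Γ : V₂ → W₁ → V₁ → W₂ → ℝ)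
    (E₁ : Set (V₁ × W₁)) (E₂ : Set (V₂ × W₂)) : Prop :=
  ∀ v₂ w₁ v₁ w₂, 0 < Γ v₂ w₁ v₁ w₂ → ((v₁, w₁) ∈ E₁ ↔ (v₂, w₂) ∈ E₂)

/-! Some weight `λᵢ` of a local bicorrelation `Γ = ∑ᵢ λᵢ pᵢ ⊗ qᵢ` is positive, and by Birkhoff's
theorem the supports of the bistochastic matrices `pᵢ` and `qᵢ` contain permutations `σ` and `τ`.
Hence `Γ v w (σ v) (τ w) > 0` for all `v, w`, and fitting the game at these entries says exactly
that `(σ, τ)` is a hypergraph isomorphism. Conversely, an isomorphism `(σ, τ)` gives the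
deterministic local bicorrelation `σ ⊗ τ`, which fits the game. -/

open Finset Matrix

theorem exists_pos_of_sum_eq_one {ι : Type*} [Fintype ι] {w : ι → ℝ} (hw : ∑ i, w i = 1) :
    ∃ i, 0 < w i := by
  by_contra! h
  linarith [sum_nonpos fun i (_ : i ∈ univ) => h i]

section Bistochastic

variable {V : Type*} [Fintype V]

theorem isBistochastic_iff_mem_doublyStochastic [DecidableEq V] {p : V → V → ℝ} :
    IsBistochastic p ↔ Matrix.of p ∈ doublyStochastic ℝ V :=
  mem_doublyStochastic_iff_sum.symm

theorem isBistochastic_permMatrix [DecidableEq V] (σ : Equiv.Perm V) :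
    IsBistochastic (σ.permMatrix ℝ) :=
  isBistochastic_iff_mem_doublyStochastic.2 permMatrix_mem_doublyStochastic

theorem IsBistochastic.exists_perm_pos {p : V → V → ℝ} (hp : IsBistochastic p) :
    ∃ σ : Equiv.Perm V, ∀ v, 0 < p v (σ v) := by
  classical
  obtain ⟨w, hw_nonneg, hw_sum, hw_eq⟩ :=
    exists_eq_sum_perm_of_mem_doublyStochastic (isBistochastic_iff_mem_doublyStochastic.1 hp)
  obtain ⟨σ, hσ⟩ := exists_pos_of_sum_eq_one hw_sum
  refine ⟨σ, fun v => hσ.trans_le ?_⟩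
  have hp_eq : p v (σ v) = ∑ τ, w τ * τ.permMatrix ℝ v (σ v) := by
    simpa [Matrix.sum_apply] using (congrFun (congrFun hw_eq v) (σ v)).symm
  rw [hp_eq]
  calc w σ = w σ * σ.permMatrix ℝ v (σ v) := by simp
    _ ≤ ∑ τ, w τ * τ.permMatrix ℝ v (σ v) :=
      single_le_sum (f := fun τ => w τ * τ.permMatrix ℝ v (σ v))
        (fun τ _ => mul_nonneg (hw_nonneg τ)
          (nonneg_of_mem_doublyStochastic permMatrix_mem_doublyStochastic))
        (mem_univ σ)

end Bistochastic

section LocalBicorr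

variable {V W : Type*}

theorem fitsHom_permMatrix [DecidableEq V] [DecidableEq W] {E₁ E₂ : Set (V × W)}
    {σ : Equiv.Perm V} {τ : Equiv.Perm W}
    (h : ∀ v w, (σ v, w) ∈ E₁ ↔ (v, τ w) ∈ E₂) :
    FitsHom (fun v₂ w₁ v₁ w₂ => σ.permMatrix ℝ v₂ v₁ * τ.permMatrix ℝ w₁ w₂) E₁ E₂ := by
  intro v₂ w₁ v₁ w₂ hpos
  obtain rfl : v₁ = σ v₂ := by
    by_contra hne
    simp [Ne.symm hne] at hpos
  obtain rfl : w₂ = τ w₁ := by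
    by_contra hne
    simp [Ne.symm hne] at hpos
  exact h v₂ w₁

variable [Fintype V] [Fintype W]

theorem IsLocalBicorr.exists_perm_pos {Γ : V → W → V → W → ℝ} (hΓ : IsLocalBicorr Γ) :
    ∃ (σ : Equiv.Perm V) (τ : Equiv.Perm W), ∀ v w, 0 < Γ v w (σ v) (τ w) := by
  obtain ⟨n, lam, p, q, hlam_nonneg, hlam_sum, hp, hq, hΓ_eq⟩ := hΓ
  obtain ⟨i, hi⟩ := exists_pos_of_sum_eq_one hlam_sum
  obtain ⟨σ, hσ⟩ := (hp i).exists_perm_pos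
  obtain ⟨τ, hτ⟩ := (hq i).exists_perm_pos
  refine ⟨σ, τ, fun v w => ?_⟩
  rw [hΓ_eq]
  exact (mul_pos hi (mul_pos (hσ v) (hτ w))).trans_le <|
    single_le_sum (f := fun j => lam j * (p j v (σ v) * q j w (τ w)))
      (fun j _ => mul_nonneg (hlam_nonneg j) (mul_nonneg ((hp j).1 _ _) ((hq j).1 _ _)))
      (mem_univ i)

theorem isLocalBicorr_permMatrix [DecidableEq V] [DecidableEq W]
    (σ : Equiv.Perm V) (τ : Equiv.Perm W) :
    IsLocalBicorr fun v₂ w₁ v₁ w₂ => σ.permMatrix ℝ v₂ v₁ * τ.permMatrix ℝ w₁ w₂ :=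
  ⟨1, fun _ => 1, fun _ => σ.permMatrix ℝ, fun _ => τ.permMatrix ℝ, fun _ => zero_le_one,
    by simp, fun _ => isBistochastic_permMatrix σ, fun _ => isBistochastic_permMatrix τ,
    by simp⟩

end LocalBicorr

/-- There is a local bicorrelation fitting the game `E₁ ↔ E₂` iff the hypergraphs
`E₁` and `E₂` are isomorphic. -/
theorem localIso_iff {V W : Type*} [Fintype V] [Fintype W]
    (E₁ E₂ : Set (V × W)) :
    (∃ Γ : V → W → V → W → ℝ, IsLocalBicorr Γ ∧ FitsHom Γ E₁ E₂) ↔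
      (∃ (f : V → V) (g : W → W),
        Function.Bijective f ∧ Function.Bijective g ∧
        ∀ v w, (f v, w) ∈ E₁ ↔ (v, g w) ∈ E₂) := by
  classical
  constructor
  · rintro ⟨Γ, hΓ, hfit⟩
    obtain ⟨σ, τ, hpos⟩ := hΓ.exists_perm_pos
    exact ⟨σ, τ, σ.bijective, τ.bijective, fun v w => hfit v w (σ v) (τ w) (hpos v w)⟩
  · rintro ⟨f, g, hf, hg, hfg⟩
    exact ⟨_, isLocalBicorr_permMatrix (.ofBijective f hf) (.ofBijective g hg),
      fitsHom_permMatrix hfg⟩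
end

section
/- Let E_i ⊆ V_i×W_i be hypergraphs and 𝔈_i sets of channels from V_i to W_i, i = 1,2. Suppose Γ is an NS correlation over (V₂,W₁,V₁,W₂) fitting the game E₁↔E₂, and suppose Γ[𝓔] ∈ 𝔈₂ for every 𝓔 ∈ 𝔈₁. Let π₂ be a probability distribution on V₂ and define π₁(v₁) = Σ_{v₂∈V₂} Γ_{V₂→V₁}(v₁|v₂)π₂(v₂), where Γ_{V₂→V₁}(v₁|v₂) = Σ_{w₂∈W₂} Γ(v₁,w₂|v₂,w₁) (independent of w₁). Then ω_{𝔈₁}(E₁,π₁) ≤ ω_{𝔈₂}(E₂,π₂). -/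
/-- The value `ω_𝔈(E, π) = sup_{𝓔 ∈ 𝔈} Σ_{(v,w) ∈ E} π(v) 𝓔(w|v)`. -/
noncomputable def omegaVal {V W : Type*} [Fintype V] [Fintype W]
    (E : Set (V × W)) (π : V → ℝ) (𝔈 : Set (V → W → ℝ)) : ℝ :=
  sSup ((fun 𝓔 => ∑ v, ∑ w, Set.indicator E (fun q => π q.1 * 𝓔 q.1 q.2) (v, w)) '' 𝔈)

/-! Simulating a strategy `𝓔` through `Γ` preserves the winning probability exactly: both
`Σ_{E₁} π₁(v₁)𝓔(w₁|v₁)` and `Σ_{E₂} π₂(v₂)Γ[𝓔](w₂|v₂)` expand into sums of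
`π₂(v₂) Γ(v₁,w₂|v₂,w₁) 𝓔(w₁|v₁)` over all quadruples, and since `Γ` fits `E₁ ↔ E₂`, a term with
`Γ > 0` is counted on one side iff it is counted on the other. As `Γ[·]` maps `𝔈₁` into `𝔈₂`,
`ω_{𝔈₁}(E₁, π₁)` is a supremum over a subset of the values defining `ω_{𝔈₂}(E₂, π₂)`. -/

open Finset

section WinProb

variable {V W : Type*} [Fintype V] [Fintype W]

noncomputable def winProb (E : Set (V × W)) (π : V → ℝ) (𝓔 : V → W → ℝ) : ℝ :=
  ∑ v, ∑ w, Set.indicator E (fun q => π q.1 * 𝓔 q.1 q.2) (v, w)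

lemma omegaVal_eq_sSup_image_winProb (E : Set (V × W)) (π : V → ℝ) (𝔈 : Set (V → W → ℝ)) :
    omegaVal E π 𝔈 = sSup (winProb E π '' 𝔈) :=
  rfl

lemma winProb_eq_sum_indicator_mul (E : Set (V × W)) (π : V → ℝ) (𝓔 : V → W → ℝ) :
    winProb E π 𝓔 = ∑ q : V × W, E.indicator 1 q * (π q.1 * 𝓔 q.1 q.2) := by
  rw [winProb, ← Fintype.sum_prod_type']
  refine sum_congr rfl fun q _ => ?_
  by_cases hq : q ∈ E <;> simp [hq]

variable {E : Set (V × W)} {π : V → ℝ}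

lemma winProb_nonneg (hπ : ∀ v, 0 ≤ π v) {𝓔 : V → W → ℝ} (h𝓔 : ∀ v w, 0 ≤ 𝓔 v w) :
    0 ≤ winProb E π 𝓔 :=
  sum_nonneg fun _ _ => sum_nonneg fun _ _ =>
    Set.indicator_nonneg (fun q _ => mul_nonneg (hπ q.1) (h𝓔 q.1 q.2)) _

lemma winProb_le_sum (hπ : ∀ v, 0 ≤ π v) {𝓔 : V → W → ℝ} (h𝓔 : IsChannel 𝓔) :
    winProb E π 𝓔 ≤ ∑ v, π v :=
  calc winProb E π 𝓔 ≤ ∑ v, ∑ w, π v * 𝓔 v w :=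
        sum_le_sum fun _ _ => sum_le_sum fun _ _ =>
          Set.indicator_le_self' (fun q _ => mul_nonneg (hπ q.1) (h𝓔.1 q.1 q.2)) _
    _ = ∑ v, π v := by simp only [← mul_sum, h𝓔.2, mul_one]

lemma omegaVal_mono (hπ : ∀ v, 0 ≤ π v) {𝔈 𝔈' : Set (V → W → ℝ)}
    (h𝔈' : ∀ 𝓔 ∈ 𝔈', IsChannel 𝓔) (h : 𝔈 ⊆ 𝔈') : omegaVal E π 𝔈 ≤ omegaVal E π 𝔈' := by
  have hbdd : BddAbove (winProb E π '' 𝔈') :=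
    ⟨∑ v, π v, Set.forall_mem_image.2 fun 𝓔 h𝓔 => winProb_le_sum hπ (h𝔈' 𝓔 h𝓔)⟩
  -- For `𝔈 = ∅` the left side is the junk value `sSup ∅ = 0`, hence the need for `0 ≤ ω_{𝔈'}`.
  exact Real.sSup_le
    (Set.forall_mem_image.2 fun 𝓔 h𝓔 => le_csSup hbdd (Set.mem_image_of_mem _ (h h𝓔)))
    (Real.sSup_nonneg (Set.forall_mem_image.2 fun 𝓔 h𝓔 => winProb_nonneg hπ (h𝔈' 𝓔 h𝓔).1))

end WinProb

section Simulation

variable {V₁ W₁ V₂ W₂ : Type*} {Γ : V₂ → W₁ → V₁ → W₂ → ℝ}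
  {E₁ : Set (V₁ × W₁)} {E₂ : Set (V₂ × W₂)}

lemma FitsHom.indicator_mul_eq (hfit : FitsHom Γ E₁ E₂) (hΓ : ∀ v₂ w₁ v₁ w₂, 0 ≤ Γ v₂ w₁ v₁ w₂)
    (v₂ : V₂) (w₁ : W₁) (v₁ : V₁) (w₂ : W₂) :
    E₁.indicator 1 (v₁, w₁) * Γ v₂ w₁ v₁ w₂ = E₂.indicator 1 (v₂, w₂) * Γ v₂ w₁ v₁ w₂ := by
  rcases (hΓ v₂ w₁ v₁ w₂).eq_or_lt with h | h
  · simp [← h]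
  · have hiff := hfit _ _ _ _ h
    by_cases h₁ : (v₁, w₁) ∈ E₁
    · simp [h₁, hiff.mp h₁]
    · simp [h₁, mt hiff.mpr h₁]

variable [Fintype V₁] [Fintype W₁] [Fintype V₂] [Fintype W₂]

lemma winProb_simulate (hΓ : ∀ v₂ w₁ v₁ w₂, 0 ≤ Γ v₂ w₁ v₁ w₂) (hfit : FitsHom Γ E₁ E₂)
    {π₁ : V₁ → ℝ} {π₂ : V₂ → ℝ} (hπ₁ : ∀ w₁ v₁, π₁ v₁ = ∑ v₂, (∑ w₂, Γ v₂ w₁ v₁ w₂) * π₂ v₂)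
    (𝓔 : V₁ → W₁ → ℝ) : winProb E₂ π₂ (simulate Γ 𝓔) = winProb E₁ π₁ 𝓔 := by
  simp only [winProb_eq_sum_indicator_mul]
  calc ∑ q₂ : V₂ × W₂, E₂.indicator 1 q₂ * (π₂ q₂.1 * simulate Γ 𝓔 q₂.1 q₂.2)
      = ∑ q₂ : V₂ × W₂, ∑ q₁ : V₁ × W₁,
          π₂ q₂.1 * (E₂.indicator 1 q₂ * Γ q₂.1 q₁.2 q₁.1 q₂.2) * 𝓔 q₁.1 q₁.2 := by
        refine sum_congr rfl fun q₂ _ => ?_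
        rw [simulate, ← Fintype.sum_prod_type', mul_sum, mul_sum]
        exact sum_congr rfl fun _ _ => by ring
    _ = ∑ q₁ : V₁ × W₁, ∑ q₂ : V₂ × W₂,
          π₂ q₂.1 * (E₁.indicator 1 q₁ * Γ q₂.1 q₁.2 q₁.1 q₂.2) * 𝓔 q₁.1 q₁.2 := by
        rw [sum_comm]
        simp only [hfit.indicator_mul_eq hΓ]
    _ = ∑ q₁ : V₁ × W₁, E₁.indicator 1 q₁ * (π₁ q₁.1 * 𝓔 q₁.1 q₁.2) := by
        refine sum_congr rfl fun q₁ _ => ?_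
        rw [hπ₁ q₁.2 q₁.1, sum_mul, mul_sum, Fintype.sum_prod_type]
        refine sum_congr rfl fun v₂ _ => ?_
        rw [sum_mul, sum_mul, mul_sum]
        exact sum_congr rfl fun _ _ => by ring

end Simulation

theorem omegaVal_le_of_hom_general {V₁ W₁ V₂ W₂ : Type*}
    [Fintype V₁] [Fintype W₁] [Fintype V₂] [Fintype W₂]
    (E₁ : Set (V₁ × W₁)) (E₂ : Set (V₂ × W₂))
    (𝔈₁ : Set (V₁ → W₁ → ℝ)) (𝔈₂ : Set (V₂ → W₂ → ℝ))
    (h𝔈₂ : ∀ E ∈ 𝔈₂, IsChannel E)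
    (Γ : V₂ → W₁ → V₁ → W₂ → ℝ) (hΓ : IsNSCorr Γ) (hfit : FitsHom Γ E₁ E₂)
    (hsim : ∀ E ∈ 𝔈₁, simulate Γ E ∈ 𝔈₂)
    (π₂ : V₂ → ℝ) (hπ₂pos : ∀ v₂, 0 ≤ π₂ v₂)
    (π₁ : V₁ → ℝ)
    (hπ₁ : ∀ w₁ v₁, π₁ v₁ = ∑ v₂, (∑ w₂, Γ v₂ w₁ v₁ w₂) * π₂ v₂) :
    omegaVal E₁ π₁ 𝔈₁ ≤ omegaVal E₂ π₂ 𝔈₂ := by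
  calc omegaVal E₁ π₁ 𝔈₁ = omegaVal E₂ π₂ (simulate Γ '' 𝔈₁) := by
        simp only [omegaVal_eq_sSup_image_winProb, Set.image_image, winProb_simulate hΓ.1 hfit hπ₁]
    _ ≤ omegaVal E₂ π₂ 𝔈₂ := omegaVal_mono hπ₂pos h𝔈₂ (Set.image_subset_iff.2 hsim)

/-- If `Γ` is an NS correlation fitting `E₁ ↔ E₂` which maps `𝔈₁` into `𝔈₂` under
simulation, then `ω_{𝔈₁}(E₁, π₁) ≤ ω_{𝔈₂}(E₂, π₂)`, where `π₁ = Γ_{V₂→V₁}(π₂)`. -/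
theorem omegaVal_le_of_hom {V₁ W₁ V₂ W₂ : Type*}
    [Fintype V₁] [Fintype W₁] [Fintype V₂] [Fintype W₂]
    (E₁ : Set (V₁ × W₁)) (E₂ : Set (V₂ × W₂))
    (𝔈₁ : Set (V₁ → W₁ → ℝ)) (𝔈₂ : Set (V₂ → W₂ → ℝ))
    (h𝔈₁ : ∀ E ∈ 𝔈₁, IsChannel E) (h𝔈₂ : ∀ E ∈ 𝔈₂, IsChannel E)
    (Γ : V₂ → W₁ → V₁ → W₂ → ℝ) (hΓ : IsNSCorr Γ) (hfit : FitsHom Γ E₁ E₂)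
    (hsim : ∀ E ∈ 𝔈₁, simulate Γ E ∈ 𝔈₂)
    (π₂ : V₂ → ℝ) (hπ₂pos : ∀ v₂, 0 ≤ π₂ v₂) (hπ₂sum : ∑ v₂, π₂ v₂ = 1)
    (π₁ : V₁ → ℝ)
    (hπ₁ : ∀ w₁ v₁, π₁ v₁ = ∑ v₂, (∑ w₂, Γ v₂ w₁ v₁ w₂) * π₂ v₂) :
    omegaVal E₁ π₁ 𝔈₁ ≤ omegaVal E₂ π₂ 𝔈₂ :=
  omegaVal_le_of_hom_general E₁ E₂ 𝔈₁ 𝔈₂ h𝔈₂ Γ hΓ hfit hsim π₂ hπ₂pos π₁ hπ₁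
end

section
/- Let V be a finite set, d a positive integer, and E₁, E₂ ⊆ V×V. Let P = (P_{v,w})_{v,w∈V} be a family of d×d complex matrices such that each P_{v,w} is an orthogonal projection (P_{v,w}* = P_{v,w} and P_{v,w}² = P_{v,w}), Σ_{w∈V} P_{v,w} = I_d for every v∈V, and Σ_{v∈V} P_{v,w} = I_d for every w∈V (a quantum permutation). Suppose P satisfies the intertwining relation P(A_{E₁}⊗I_d) = (A_{E₂}⊗I_d)P, i.e. Σ_{v' : (v,v')∈E₂} P_{v',w'} = Σ_{w : (w,w')∈E₁} P_{v,w} for all v, w' ∈ V. Then for all v, v', w, w' ∈ V such that exactly one of the conditions (v,v')∈E₂ and (w,w')∈E₁ holds, one has P_{v',w'}P_{v,w} = 0 and P_{v,w}P_{v',w'} = 0. -/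
/-!
Projections summing to `1` in a C⋆-algebra are pairwise orthogonal, so every row and every
column of a quantum permutation is a family of orthogonal idempotents. The intertwining relation
at `(v, w')` equates the sum of the `P v' w'` with `(v, v') ∈ E₂` and the sum of the `P v w`
with `(w, w') ∈ E₁`. A member of one sub-sum is absorbed by this common value, while a member
of the other family outside its sub-sum is annihilated by it, so the two are orthogonal.
-/

open Matrix Finset

section OrthogonalIdempotents

variable {R I J : Type*} [Semiring R] {e : I → R} {f : J → R}

lemma OrthogonalIdempotents.sum_mul_of_mem (he : OrthogonalIdempotents e)
    {i : I} {s : Finset I} (h : i ∈ s) : (∑ j ∈ s, e j) * e i = e i := by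
  classical
  simp [Finset.sum_mul, he.mul_eq, h]

lemma OrthogonalIdempotents.sum_mul_of_notMem (he : OrthogonalIdempotents e)
    {i : I} {s : Finset I} (h : i ∉ s) : (∑ j ∈ s, e j) * e i = 0 := by
  classical
  simp [Finset.sum_mul, he.mul_eq, h]

lemma OrthogonalIdempotents.mul_eq_zero_of_sum_eq_sum (he : OrthogonalIdempotents e)
    (hf : OrthogonalIdempotents f) {s : Finset I} {t : Finset J}
    (hst : ∑ i ∈ s, e i = ∑ j ∈ t, f j) {i : I} {j : J} (hi : i ∈ s) (hj : j ∉ t) :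
    e i * f j = 0 ∧ f j * e i = 0 := by
  constructor
  · calc e i * f j = e i * ((∑ j ∈ t, f j) * f j) := by
          rw [← mul_assoc, ← hst, he.mul_sum_of_mem hi]
      _ = 0 := by rw [hf.sum_mul_of_notMem hj, mul_zero]
  · calc f j * e i = (f j * ∑ j ∈ t, f j) * e i := by
          rw [mul_assoc, ← hst, he.sum_mul_of_mem hi]
      _ = 0 := by rw [hf.mul_sum_of_notMem hj, zero_mul]

end OrthogonalIdempotents

/-- `∑_{k ≠ i} (pₖ pᵢ)⋆ (pₖ pᵢ) = pᵢ (1 - pᵢ) pᵢ = 0` is a vanishing sum of positive elements. -/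
theorem CompleteOrthogonalIdempotents.of_isStarProjection {R ι : Type*} [NormedRing R]
    [StarRing R] [CStarRing R] [PartialOrder R] [StarOrderedRing R] [Fintype ι]
    {p : ι → R} (hp : ∀ i, IsStarProjection (p i)) (hsum : ∑ i, p i = 1) :
    CompleteOrthogonalIdempotents p := by
  classical
  refine ⟨⟨fun i ↦ (hp i).isIdempotentElem, fun i k hik ↦ ?_⟩, hsum⟩
  have hidem : ∀ i, p i * p i = p i := fun i ↦ (hp i).isIdempotentElem.eq
  have hterm : ∀ k, star (p k * p i) * (p k * p i) = p i * (p k * p i) := fun k ↦ by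
    rw [star_mul, (hp i).isSelfAdjoint.star_eq, (hp k).isSelfAdjoint.star_eq, mul_assoc,
      ← mul_assoc (p k), hidem]
  have hvanish : ∑ k ∈ univ.erase i, star (p k * p i) * (p k * p i) = 0 := by
    have hexpand : p i * ((∑ k, p k) * p i) = p i := by rw [hsum, one_mul, hidem]
    rw [Finset.sum_mul, Finset.mul_sum, ← add_sum_erase _ _ (mem_univ i), hidem, hidem] at hexpand
    simpa only [hterm] using add_eq_left.mp hexpand
  have hki : p k * p i = 0 := CStarRing.star_mul_self_eq_zero_iff _ |>.mp <|
    (sum_eq_zero_iff_of_nonneg fun k _ ↦ star_mul_self_nonneg _).mp hvanish k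
      (mem_erase.mpr ⟨hik.symm, mem_univ k⟩)
  simpa [star_mul, (hp i).isSelfAdjoint.star_eq, (hp k).isSelfAdjoint.star_eq] using
    congrArg star hki

theorem quantumPermutation_intertwine_orthogonal_general
    {V : Type*} [Fintype V] (d : ℕ)
    (E₁ E₂ : Set (V × V)) [DecidablePred (· ∈ E₁)] [DecidablePred (· ∈ E₂)]
    (P : V → V → Matrix (Fin d) (Fin d) ℂ)
    (hsa : ∀ v w, (P v w)ᴴ = P v w)
    (hidem : ∀ v w, P v w * P v w = P v w)
    (hrow : ∀ v, ∑ w, P v w = 1)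
    (hcol : ∀ w, ∑ v, P v w = 1)
    (hint : ∀ v w', (∑ v', if (v, v') ∈ E₂ then P v' w' else 0) =
                    (∑ w, if (w, w') ∈ E₁ then P v w else 0)) :
    ∀ v v' w w', Xor' ((v, v') ∈ E₂) ((w, w') ∈ E₁) →
      P v' w' * P v w = 0 ∧ P v w * P v' w' = 0 := by
  intro v v' w w' hxor
  open scoped MatrixOrder Matrix.Norms.L2Operator in
  have hrow' : OrthogonalIdempotents (P v) :=
    (CompleteOrthogonalIdempotents.of_isStarProjection (fun u ↦ ⟨hidem v u, hsa v u⟩)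
      (hrow v)).toOrthogonalIdempotents
  open scoped MatrixOrder Matrix.Norms.L2Operator in
  have hcol' : OrthogonalIdempotents (P · w') :=
    (CompleteOrthogonalIdempotents.of_isStarProjection (fun u ↦ ⟨hidem u w', hsa u w'⟩)
      (hcol w')).toOrthogonalIdempotents
  have hsum : ∑ u ∈ univ.filter (fun u ↦ (v, u) ∈ E₂), P u w' =
      ∑ u ∈ univ.filter (fun u ↦ (u, w') ∈ E₁), P v u := by
    simpa only [sum_filter] using hint v w'
  rcases hxor with ⟨hv, hw⟩ | ⟨hw, hv⟩
  · exact hcol'.mul_eq_zero_of_sum_eq_sum hrow' hsum (by simpa using hv) (by simpa using hw)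
  · exact (hrow'.mul_eq_zero_of_sum_eq_sum hcol' hsum.symm (by simpa using hw)
      (by simpa using hv)).symm

/-- If a quantum permutation `P` (with `d × d` matrix entries) intertwines the incidence
matrices of `E₁` and `E₂`, then `P_{v',w'} P_{v,w} = 0 = P_{v,w} P_{v',w'}` whenever
exactly one of `(v,v') ∈ E₂` and `(w,w') ∈ E₁` holds. -/
theorem quantumPermutation_intertwine_orthogonal
    {V : Type*} [Fintype V] (d : ℕ) (hd : 0 < d)
    (E₁ E₂ : Set (V × V)) [DecidablePred (· ∈ E₁)] [DecidablePred (· ∈ E₂)]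
    (P : V → V → Matrix (Fin d) (Fin d) ℂ)
    (hsa : ∀ v w, (P v w)ᴴ = P v w)
    (hidem : ∀ v w, P v w * P v w = P v w)
    (hrow : ∀ v, ∑ w, P v w = 1)
    (hcol : ∀ w, ∑ v, P v w = 1)
    (hint : ∀ v w', (∑ v', if (v, v') ∈ E₂ then P v' w' else 0) =
                    (∑ w, if (w, w') ∈ E₁ then P v w else 0)) :
    ∀ v v' w w', Xor' ((v, v') ∈ E₂) ((w, w') ∈ E₁) →
      P v' w' * P v w = 0 ∧ P v w * P v' w' = 0 :=
  quantumPermutation_intertwine_orthogonal_general d E₁ E₂ P hsa hidem hrow hcol hint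
end
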